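/- arXiv:2207.00848 — 3 statements merged into one kernel-verified Lean document; each statement's English description precedes it below -/
import Mathlib

section
/- If there exists a weak isomorphism φ : M → N between two persistence modules (i.e., a natural transformation whose kernel and cokernel are ephemeral), then the interleaving distance between M and N is 0. -/
open scoped ENNReal

/-- A persistence module: a functor `(ℝ, ≤) → Vect_k`. -/
structure PersMod (k : Type) [Field k] where
  V : ℝ → Type
  [addCommGroup : ∀ t, AddCommGroup (V t)]
  [module : ∀ t, Module k (V t)]
  map : ∀ {s t : ℝ}, s ≤ t → (V s →ₗ[k] V t)
  map_refl : ∀ t : ℝ, map (le_refl t) = LinearMap.id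
  map_trans : ∀ {s t u : ℝ} (hst : s ≤ t) (htu : t ≤ u),
    map (hst.trans htu) = (map htu).comp (map hst)

attribute [instance] PersMod.addCommGroup PersMod.module

variable {k : Type} [Field k]

/-- A morphism of persistence modules: a natural transformation. -/
structure PersHom (M N : PersMod k) where
  app : ∀ t : ℝ, M.V t →ₗ[k] N.V t
  nat : ∀ {s t : ℝ} (h : s ≤ t), (app t).comp (M.map h) = (N.map h).comp (app s)

/-- A persistence module is ephemeral if all structure maps `M_{s,t}` with `s < t` vanish. -/
def Ephemeral (M : PersMod k) : Prop := ∀ {s t : ℝ} (h : s < t), M.map h.le = 0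

/-- The pointwise kernel of a morphism of persistence modules. -/
noncomputable def kerMod {M N : PersMod k} (φ : PersHom M N) : PersMod k where
  V t := LinearMap.ker (φ.app t)
  map {s t} h := (M.map h).restrict (p := LinearMap.ker (φ.app s))
    (q := LinearMap.ker (φ.app t)) (fun x hx => by
      have := congrArg (fun (f : M.V s →ₗ[k] N.V t) => f x) (φ.nat h)
      simp only [LinearMap.comp_apply] at this
      simp only [LinearMap.mem_ker] at hx ⊢
      rw [this, hx, map_zero])
  map_refl t := by
    ext x
    simp [LinearMap.restrict_apply, PersMod.map_refl]
  map_trans {s t u} hst htu := by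
    ext x
    simp [LinearMap.restrict_apply, M.map_trans hst htu]

/-- The pointwise cokernel of a morphism of persistence modules. -/
noncomputable def cokerMod {M N : PersMod k} (φ : PersHom M N) : PersMod k where
  V t := N.V t ⧸ LinearMap.range (φ.app t)
  map {s t} h := Submodule.mapQ _ _ (N.map h) (by
    rintro y ⟨x, rfl⟩
    have := congrArg (fun (f : M.V s →ₗ[k] N.V t) => f x) (φ.nat h)
    simp only [LinearMap.comp_apply] at this
    exact ⟨M.map h x, this⟩)
  map_refl t := by
    ext y
    simp [PersMod.map_refl]
  map_trans {s t u} hst htu := by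
    ext y
    simp [N.map_trans hst htu]

/-- A weak isomorphism: a morphism whose (pointwise) kernel and cokernel persistence
modules are ephemeral. -/
def WeakIso {M N : PersMod k} (φ : PersHom M N) : Prop :=
  Ephemeral (kerMod φ) ∧ Ephemeral (cokerMod φ)

/-- A `δ`-interleaving between two persistence modules. -/
def Interleaved (M N : PersMod k) (δ : ℝ) : Prop :=
  0 ≤ δ ∧ ∃ (F : ∀ t : ℝ, M.V t →ₗ[k] N.V (t + δ)) (G : ∀ t : ℝ, N.V t →ₗ[k] M.V (t + δ)),
    (∀ s t : ℝ, ∀ h : s ≤ t,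
      (F t).comp (M.map h) = (N.map ((add_le_add_left h δ : s + δ ≤ t + δ))).comp (F s)) ∧
    (∀ s t : ℝ, ∀ h : s ≤ t,
      (G t).comp (N.map h) = (M.map ((add_le_add_left h δ : s + δ ≤ t + δ))).comp (G s)) ∧
    (∀ t : ℝ, ∀ h : t ≤ t + δ + δ, (G (t + δ)).comp (F t) = M.map h) ∧
    (∀ t : ℝ, ∀ h : t ≤ t + δ + δ, (F (t + δ)).comp (G t) = N.map h)

/-- The interleaving distance between two persistence modules. -/
noncomputable def interleavingDist (M N : PersMod k) : ℝ≥0∞ :=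
  sInf {e : ℝ≥0∞ | ∃ δ : ℝ, e = ENNReal.ofReal δ ∧ Interleaved M N δ}

/-- A persistence module is q-tame if all structure maps `M_{s,t}` with `s < t`
have finite rank. -/
def QTame (M : PersMod k) : Prop :=
  ∀ {s t : ℝ} (h : s < t), Module.Finite k (LinearMap.range (M.map h.le))

section Aux

variable {M N : PersMod k} (φ : PersHom M N)

/-- Extract from the ephemeral kernel: elements of the kernel die under positive shifts. -/
lemma ker_vanish (hφ : WeakIso φ) {u v : ℝ} (h : u < v) (x : M.V u)
    (hx : φ.app u x = 0) : M.map h.le x = 0 := by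
  have h2 : ((kerMod φ).map h.le) ⟨x, hx⟩ = 0 := by rw [hφ.1 h]; rfl
  exact congrArg Subtype.val h2

/-- Extract from the ephemeral cokernel: positive shifts land in the range of `φ`. -/
lemma coker_surj (hφ : WeakIso φ) {s t : ℝ} (h : s < t) (y : N.V s) :
    ∃ x : M.V t, φ.app t x = N.map h.le y := by
  have h2 : ((cokerMod φ).map h.le) (Submodule.Quotient.mk y) = 0 := by rw [hφ.2 h]; rfl
  have h3 : ((cokerMod φ).map h.le) (Submodule.Quotient.mk y)
      = (Submodule.Quotient.mk (N.map h.le y) :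
        N.V t ⧸ LinearMap.range (φ.app t)) := rfl
  rw [h2] at h3
  have h4 := (Submodule.Quotient.mk_eq_zero _).mp h3.symm
  obtain ⟨x, hx⟩ := h4
  exact ⟨x, hx⟩

/-- The "inverse up to shift" of a weak isomorphism. -/
noncomputable def Gmap (hφ : WeakIso φ) {t u v : ℝ} (htu : t < u) (huv : u < v) :
    N.V t →ₗ[k] M.V v :=
  (Submodule.liftQ (LinearMap.ker (φ.app u)) (M.map huv.le)
    (fun x hx => LinearMap.mem_ker.mpr (ker_vanish φ hφ huv x (LinearMap.mem_ker.mp hx)))).comp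
    (((LinearMap.quotKerEquivRange (φ.app u)).symm.toLinearMap).comp
      ((N.map htu.le).codRestrict (LinearMap.range (φ.app u))
        (fun y => by
          obtain ⟨x, hx⟩ := coker_surj φ hφ htu y
          exact LinearMap.mem_range.mpr ⟨x, hx⟩)))

lemma Gmap_apply (hφ : WeakIso φ) {t u v : ℝ} (htu : t < u) (huv : u < v)
    (y : N.V t) (x : M.V u) (hx : φ.app u x = N.map htu.le y) :
    Gmap φ hφ htu huv y = M.map huv.le x := by
  unfold Gmap
  simp only [LinearMap.comp_apply, LinearEquiv.coe_toLinearMap]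
  have h1 : ((N.map htu.le).codRestrict (LinearMap.range (φ.app u))
      (fun y => by obtain ⟨x, hx⟩ := coker_surj φ hφ htu y; exact LinearMap.mem_range.mpr ⟨x, hx⟩)) y
      = ⟨φ.app u x, LinearMap.mem_range_self _ x⟩ := Subtype.ext (by simp [hx])
  rw [h1, LinearMap.quotKerEquivRange_symm_apply_image, Submodule.mkQ_apply, Submodule.liftQ_apply]

end Aux

/-- If there is a weak isomorphism `φ : M → N` between two persistence
modules, then the interleaving distance between `M` and `N` is `0`. -/
theorem weakIso_interleavingDist_eq_zero {M N : PersMod k} (φ : PersHom M N)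
    (hφ : WeakIso φ) : interleavingDist M N = 0 := by
  have key : ∀ δ : ℝ, 0 < δ → Interleaved M N δ := by
    intro δ hδ
    refine ⟨hδ.le,
      fun t => (N.map (by linarith : t ≤ t + δ)).comp (φ.app t),
      fun t => Gmap φ hφ (by linarith : t < t + δ/2) (by linarith : t + δ/2 < t + δ),
      ?_, ?_, ?_, ?_⟩
    · -- naturality of F
      intro s t h
      ext x
      simp only [LinearMap.comp_apply]
      have hnat : φ.app t (M.map h x) = N.map h (φ.app s x) := by
        have := congrArg (fun (f : M.V s →ₗ[k] N.V t) => f x) (φ.nat h)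
        simpa using this
      rw [hnat]
      have e1 : N.map (by linarith : t ≤ t + δ) (N.map h (φ.app s x))
          = N.map (by linarith : s ≤ t + δ) (φ.app s x) := by
        rw [N.map_trans h (by linarith : t ≤ t + δ)]; rfl
      have e2 : N.map (add_le_add_left h δ : s + δ ≤ t + δ) (N.map (by linarith : s ≤ s + δ) (φ.app s x))
          = N.map (by linarith : s ≤ t + δ) (φ.app s x) := by
        rw [N.map_trans (by linarith : s ≤ s + δ) (add_le_add_left h δ : s + δ ≤ t + δ)]; rfl
      rw [e1, e2]
    · -- naturality of G
      intro s t h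
      ext y
      simp only [LinearMap.comp_apply]
      obtain ⟨x, hx⟩ := coker_surj φ hφ (by linarith : s < s + δ/2) y
      have hx' : φ.app (t + δ/2) (M.map (by linarith : s + δ/2 ≤ t + δ/2) x)
          = N.map (by linarith : t < t + δ/2).le (N.map h y) := by
        have hnat := congrArg (fun (f : M.V (s + δ/2) →ₗ[k] N.V (t + δ/2)) => f x)
          (φ.nat (by linarith : s + δ/2 ≤ t + δ/2))
        simp only [LinearMap.comp_apply] at hnat
        rw [hnat, hx]
        rw [← LinearMap.comp_apply (N.map _) (N.map _),
          ← N.map_trans (by linarith : s ≤ s + δ/2) (by linarith : s + δ/2 ≤ t + δ/2),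
          ← LinearMap.comp_apply (N.map _) (N.map h),
          ← N.map_trans h (by linarith : t ≤ t + δ/2)]
      rw [Gmap_apply φ hφ _ _ (N.map h y) _ hx',
        Gmap_apply φ hφ _ _ y x hx]
      rw [← LinearMap.comp_apply (M.map _) (M.map _),
        ← M.map_trans (by linarith : s + δ/2 ≤ t + δ/2) (by linarith : t + δ/2 ≤ t + δ),
        ← LinearMap.comp_apply (M.map _) (M.map _),
        ← M.map_trans (by linarith : s + δ/2 ≤ s + δ) (add_le_add_left h δ : s + δ ≤ t + δ)]
    · -- G ∘ F = structure map
      intro t h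
      ext x
      simp only [LinearMap.comp_apply]
      have hx' : φ.app (t + δ + δ/2) (M.map (by linarith : t ≤ t + δ + δ/2) x)
          = N.map (by linarith : t + δ < t + δ + δ/2).le
            (N.map (by linarith : t ≤ t + δ) (φ.app t x)) := by
        have hnat := congrArg (fun (f : M.V t →ₗ[k] N.V (t + δ + δ/2)) => f x)
          (φ.nat (by linarith : t ≤ t + δ + δ/2))
        simp only [LinearMap.comp_apply] at hnat
        rw [hnat]
        rw [← LinearMap.comp_apply (N.map _) (N.map _),
          ← N.map_trans (by linarith : t ≤ t + δ) (by linarith : t + δ ≤ t + δ + δ/2)]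
      rw [Gmap_apply φ hφ _ _ _ _ hx']
      rw [← LinearMap.comp_apply (M.map _) (M.map _),
        ← M.map_trans (by linarith : t ≤ t + δ + δ/2) (by linarith : t + δ + δ/2 ≤ t + δ + δ)]
    · -- F ∘ G = structure map
      intro t h
      ext y
      simp only [LinearMap.comp_apply]
      obtain ⟨x, hx⟩ := coker_surj φ hφ (by linarith : t < t + δ/2) y
      rw [Gmap_apply φ hφ _ _ y x hx]
      have hnat := congrArg (fun (f : M.V (t + δ/2) →ₗ[k] N.V (t + δ)) => f x)
        (φ.nat (by linarith : t + δ/2 ≤ t + δ))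
      simp only [LinearMap.comp_apply] at hnat
      rw [hnat, hx]
      rw [← LinearMap.comp_apply (N.map _) (N.map _),
        ← N.map_trans (by linarith : t + δ/2 ≤ t + δ) (by linarith : t + δ ≤ t + δ + δ),
        ← LinearMap.comp_apply (N.map _) (N.map _),
        ← N.map_trans (by linarith : t ≤ t + δ/2) (by linarith : t + δ/2 ≤ t + δ + δ)]
  refine le_antisymm ?_ zero_le
  refine ENNReal.le_of_forall_pos_le_add fun ε hε _ => ?_
  rw [zero_add]
  have hmem : (ENNReal.ofReal (ε : ℝ)) ∈
      {e : ℝ≥0∞ | ∃ δ : ℝ, e = ENNReal.ofReal δ ∧ Interleaved M N δ} :=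
    ⟨(ε : ℝ), rfl, key _ (by exact_mod_cast hε)⟩
  calc interleavingDist M N ≤ ENNReal.ofReal (ε : ℝ) := sInf_le hmem
    _ = (ε : ℝ≥0∞) := ENNReal.ofReal_coe_nnreal
end

section
/- The local connectedness shift is 2-Lipschitz with respect to the supremum norm: for any topological space X, any functor H from topological spaces to a category with a zero object, and any functions f, g : X → ℝ, one has |lcs_H(f) − lcs_H(g)| ≤ 2·‖f − g‖_∞. -/
open CategoryTheory Limits
open scoped ENNReal

variable {X : Type} [TopologicalSpace X]

/-- The inclusion of subspaces of `X`, as a morphism in `TopCat`. -/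
def inclMap {A B : Set X} (h : A ⊆ B) : TopCat.of A ⟶ TopCat.of B :=
  TopCat.ofHom ⟨Set.inclusion h, continuous_inclusion h⟩

/-- The sublevel set `f_{≤ t} = f⁻¹(−∞, t]`. -/
def sublevel (f : X → ℝ) (t : ℝ) : Set X := f ⁻¹' Set.Iic t

variable {C : Type*} [Category C] [HasZeroObject C] [HasZeroMorphisms C]

/-- The sublevel set filtration of `f` is `δ`-HLC with respect to a functor `H` from
topological spaces to a category with a zero object: for every `x`, every neighborhood
`V` of `x`, and all `s, t` with `f x < s ≤ s + δ < t` there is a neighborhood `U ⊆ V`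
of `x` such that `H` sends the inclusion `f_{≤s} ∩ U → f_{≤t} ∩ V` to zero. -/
def IsDeltaHLC (H : TopCat ⥤ C) (f : X → ℝ) (δ : ℝ) : Prop :=
  ∀ x : X, ∀ V ∈ nhds x, ∀ s t : ℝ, f x < s → s ≤ s + δ → s + δ < t →
    ∃ U ∈ nhds x, ∃ (_ : U ⊆ V) (hst : sublevel f s ∩ U ⊆ sublevel f t ∩ V),
      H.map (inclMap hst) = 0

/-- The local connectedness shift `lcs_H(f) = inf { δ > 0 : f is δ-HLC }`,
valued in `ℝ≥0∞` (with `inf ∅ = ∞`). -/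
noncomputable def lcs (H : TopCat ⥤ C) (f : X → ℝ) : ℝ≥0∞ :=
  sInf {e : ℝ≥0∞ | ∃ δ : ℝ, 0 < δ ∧ e = ENNReal.ofReal δ ∧ IsDeltaHLC H f δ}

lemma inclMap_trans {A B D : Set X} (h1 : A ⊆ B) (h2 : B ⊆ D) :
    inclMap (h1.trans h2) = inclMap h1 ≫ inclMap h2 := rfl

lemma isDeltaHLC_of_close (H : TopCat ⥤ C) {f g : X → ℝ} {δ c : ℝ}
    (hδ : 0 ≤ δ) (hc : 0 ≤ c) (hfg : ∀ x, |f x - g x| ≤ c) (hg : IsDeltaHLC H g δ) :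
    IsDeltaHLC H f (δ + 2 * c) := by
  intro x V hV s t hs _ hst
  have habs := abs_le.mp (hfg x)
  obtain ⟨U, hU, hUV, hincl, h0⟩ :=
    hg x V hV (s + c) (t - c) (by linarith) (by linarith) (by linarith)
  have h1 : sublevel f s ∩ U ⊆ sublevel g (s + c) ∩ U := by
    rintro y ⟨hy, hyU⟩
    exact ⟨by have := abs_le.mp (hfg y); simp only [sublevel, Set.mem_preimage,
      Set.mem_Iic] at hy ⊢; linarith, hyU⟩
  have h2 : sublevel g (t - c) ∩ V ⊆ sublevel f t ∩ V := by
    rintro y ⟨hy, hyV⟩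
    exact ⟨by have := abs_le.mp (hfg y); simp only [sublevel, Set.mem_preimage,
      Set.mem_Iic] at hy ⊢; linarith, hyV⟩
  refine ⟨U, hU, hUV, (h1.trans hincl).trans h2, ?_⟩
  have : inclMap ((h1.trans hincl).trans h2) =
      inclMap h1 ≫ inclMap hincl ≫ inclMap h2 := rfl
  rw [this, H.map_comp, H.map_comp, h0, zero_comp, comp_zero]

lemma lcs_le_aux (H : TopCat ⥤ C) (f g : X → ℝ) :
    lcs H f ≤ lcs H g + 2 * (⨆ x : X, ENNReal.ofReal |f x - g x|) := by
  set ε := ⨆ x : X, ENNReal.ofReal |f x - g x| with hε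
  rcases eq_or_ne ε ⊤ with h | h
  · rw [h]
    simp
  have hc : ∀ x, |f x - g x| ≤ ε.toReal := fun x =>
    (ENNReal.ofReal_le_iff_le_toReal h).mp (le_iSup (fun x => ENNReal.ofReal |f x - g x|) x)
  have hε0 : 0 ≤ ε.toReal := ENNReal.toReal_nonneg
  conv_rhs => rw [lcs]
  rw [ENNReal.sInf_add]
  refine le_iInf₂ fun e he => ?_
  obtain ⟨δ, hδ, rfl, hHLC⟩ := he
  have hf : IsDeltaHLC H f (δ + 2 * ε.toReal) :=
    isDeltaHLC_of_close H hδ.le hε0 hc hHLC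
  calc lcs H f ≤ ENNReal.ofReal (δ + 2 * ε.toReal) :=
        sInf_le ⟨δ + 2 * ε.toReal, by linarith, rfl, hf⟩
    _ = ENNReal.ofReal δ + 2 * ε := by
        rw [ENNReal.ofReal_add hδ.le (by linarith), ENNReal.ofReal_mul (by norm_num),
          ENNReal.ofReal_toReal h]
        norm_num

/-- The local connectedness shift is 2-Lipschitz with respect to the
supremum norm: `|lcs_H(f) − lcs_H(g)| ≤ 2·‖f − g‖_∞`, stated in `ℝ≥0∞` as the pair of
inequalities `lcs_H(f) ≤ lcs_H(g) + 2‖f−g‖_∞` and `lcs_H(g) ≤ lcs_H(f) + 2‖f−g‖_∞`. -/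
theorem lcs_lipschitz (H : TopCat ⥤ C) (f g : X → ℝ) :
    lcs H f ≤ lcs H g + 2 * (⨆ x : X, ENNReal.ofReal |f x - g x|) ∧
    lcs H g ≤ lcs H f + 2 * (⨆ x : X, ENNReal.ofReal |f x - g x|) := by
  have hsymm : (⨆ x : X, ENNReal.ofReal |f x - g x|) =
      ⨆ x : X, ENNReal.ofReal |g x - f x| := by
    simp_rw [abs_sub_comm]
  exact ⟨lcs_le_aux H f g, by rw [hsymm]; exact lcs_le_aux H g f⟩
end

section
/- Let X be a topological space, α an open cover of X, and define μ : S_*(α) → V_*(α) on a singular n-simplex σ (whose image lies in some member of α) by μ(σ) = [σ(e₀),…,σ(eₙ)] if the vertex images σ(e₀),…,σ(eₙ) are pairwise distinct and μ(σ) = 0 otherwise. Then μ is a chain map: μ ∘ ∂ = ∂ ∘ μ. -/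
open scoped BigOperators

variable (X : Type*) (G : Type*) [AddCommGroup G]

/-- Chains in dimension `n` on the vertex set `X` with coefficients in `G`. -/
abbrev VChain (n : ℕ) : Type _ := (Fin (n + 1) → X) →₀ G

variable {X G}

/-- The simplicial boundary, extended linearly. -/
noncomputable def vbdry {n : ℕ} (c : VChain X G (n + 1)) : VChain X G n :=
  c.sum fun σ g =>
    ∑ i : Fin (n + 2), Finsupp.single (σ ∘ Fin.succAbove i) ((-1 : ℤ) ^ (i : ℕ) • g)

variable (X G)

/-- Relations defining oriented simplicial chains: repeated-vertex tuples vanish, and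
permuting a tuple multiplies it by the sign of the permutation. -/
noncomputable def vrel (n : ℕ) : AddSubgroup (VChain X G n) :=
  AddSubgroup.closure
    ({c | ∃ (σ : Fin (n + 1) → X) (g : G), ¬ Function.Injective σ ∧ c = Finsupp.single σ g} ∪
     {c | ∃ (σ : Fin (n + 1) → X) (g : G) (π : Equiv.Perm (Fin (n + 1))),
        c = Finsupp.single σ g - Finsupp.single (σ ∘ π) ((Equiv.Perm.sign π : ℤ) • g)})

variable {X G}

/-- A chain lies in the Vietoris complex of `α` if each of its simplices has all
vertices in a single member of `α`. -/
def InVComplex (α : Set (Set X)) {n : ℕ} (c : VChain X G n) : Prop :=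
  ∀ σ ∈ c.support, ∃ U ∈ α, Set.range σ ⊆ U

/-- The topological standard `n`-simplex. -/
abbrev TopSimplex (n : ℕ) : Type := ↥(stdSimplex ℝ (Fin (n + 1)))

variable (X) in
/-- Singular `n`-simplices of a topological space `X`. -/
abbrev SingSimplex [TopologicalSpace X] (n : ℕ) : Type _ := C(TopSimplex n, X)

variable (X G) in
/-- Singular `n`-chains with coefficients in `G`. -/
abbrev SingChain [TopologicalSpace X] (n : ℕ) : Type _ := SingSimplex X n →₀ G

/-- The `i`-th vertex `eᵢ` of the standard simplex. -/
def vertex {n : ℕ} (i : Fin (n + 1)) : TopSimplex n :=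
  ⟨fun j => if i = j then 1 else 0, by
    simpa only [eq_comm] using ite_eq_mem_stdSimplex ℝ i⟩

/-- The affine face inclusion `δᵢ : Δⁿ → Δⁿ⁺¹` skipping the `i`-th vertex. -/
noncomputable def faceMap {n : ℕ} (i : Fin (n + 2)) : C(TopSimplex n, TopSimplex (n + 1)) :=
  ⟨fun p => ⟨fun j => ∑ k : Fin (n + 1), if j = Fin.succAbove i k then (p : Fin (n + 1) → ℝ) k else 0,
    by
      constructor
      · intro j
        exact Finset.sum_nonneg fun k _ => by
          split
          · exact p.2.1 k
          · exact le_rfl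
      · rw [Finset.sum_comm]
        calc (∑ k : Fin (n + 1), ∑ j : Fin (n + 2),
                if j = Fin.succAbove i k then (p : Fin (n + 1) → ℝ) k else 0)
            = ∑ k : Fin (n + 1), (p : Fin (n + 1) → ℝ) k := by
              refine Finset.sum_congr rfl fun k _ => ?_
              simp [Finset.sum_ite_eq]
          _ = 1 := p.2.2⟩,
    by
      refine Continuous.subtype_mk (continuous_pi fun j => ?_) _
      refine continuous_finset_sum _ fun k _ => ?_
      by_cases h : j = Fin.succAbove i k
      · simp only [h, ↓reduceIte]
        exact (continuous_apply k).comp continuous_subtype_val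
      · simpa [h] using continuous_const⟩

/-- The images of the vertices of the standard simplex under a singular simplex. -/
def vertexImage [TopologicalSpace X] {n : ℕ} (σ : SingSimplex X n) : Fin (n + 1) → X :=
  fun i => σ (vertex i)

open Classical in
/-- The chain map `μ : S_*(α) → V_*(α)`, sending a singular simplex `σ` to the
(ordered) Vietoris simplex `[σ(e₀),…,σ(eₙ)]` if the vertex images are pairwise distinct
and to `0` otherwise. -/
noncomputable def muChain [TopologicalSpace X] {n : ℕ} (c : SingChain X G n) :
    VChain X G n :=
  c.sum fun σ g =>
    if Function.Injective (vertexImage σ) then Finsupp.single (vertexImage σ) g else 0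

/-- The singular boundary operator. -/
noncomputable def sbdry [TopologicalSpace X] {n : ℕ} (c : SingChain X G (n + 1)) :
    SingChain X G n :=
  c.sum fun σ g =>
    ∑ i : Fin (n + 2), Finsupp.single (σ.comp (faceMap i)) ((-1 : ℤ) ^ (i : ℕ) • g)

/-- A singular chain lies in `S_*(α)` if each of its simplices has image contained in a
single member of `α`. -/
def InSComplex [TopologicalSpace X] (α : Set (Set X)) {n : ℕ} (c : SingChain X G n) :
    Prop :=
  ∀ σ ∈ c.support, ∃ U ∈ α, Set.range ⇑σ ⊆ U

variable (X) in
/-- `α` refines `β`. -/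
def Refines (α β : Set (Set X)) : Prop := ∀ U ∈ α, ∃ V ∈ β, U ⊆ V

/-! ### Auxiliary lemmas for the proof -/

section AuxMu

lemma val_succAbove' {n : ℕ} (i : Fin (n + 2)) (j : Fin (n + 1)) :
    ((Fin.succAbove i j : Fin (n + 2)) : ℕ) = if (j : ℕ) < (i : ℕ) then (j : ℕ) else (j : ℕ) + 1 := by
  simp only [Fin.succAbove, Fin.lt_def, Fin.coe_castSucc]
  split_ifs <;> simp

lemma vrel_single_of_not_injective {n : ℕ} {σ : Fin (n + 1) → X}
    (h : ¬ Function.Injective σ) (g : G) :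
    Finsupp.single σ g ∈ vrel X G n :=
  AddSubgroup.subset_closure (Or.inl ⟨σ, g, h, rfl⟩)

lemma vrel_swap {n : ℕ} (σ : Fin (n + 1) → X) (g : G) {a b : Fin (n + 1)} (hab : a ≠ b) :
    Finsupp.single σ g + Finsupp.single (σ ∘ Equiv.swap a b) g ∈ vrel X G n := by
  have h : Finsupp.single σ g -
      Finsupp.single (σ ∘ (Equiv.swap a b)) ((Equiv.Perm.sign (Equiv.swap a b) : ℤ) • g)
      ∈ vrel X G n :=
    AddSubgroup.subset_closure (Or.inr ⟨σ, g, Equiv.swap a b, rfl⟩)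
  simpa [Equiv.Perm.sign_swap hab, sub_neg_eq_add] using h

lemma vrel_pair {n : ℕ} : ∀ (d : ℕ) (v : Fin (n + 2) → X) (g : G) (a b : Fin (n + 2)),
    (a : ℕ) < (b : ℕ) → (b : ℕ) - (a : ℕ) = d + 1 → v a = v b →
    Finsupp.single (v ∘ Fin.succAbove a) ((-1 : ℤ) ^ (a : ℕ) • g)
      + Finsupp.single (v ∘ Fin.succAbove b) ((-1 : ℤ) ^ (b : ℕ) • g) ∈ vrel X G n := by
  intro d
  induction d with
  | zero =>
    intro v g a b hab hd hv
    have hb : (b : ℕ) = (a : ℕ) + 1 := by omega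
    have hfun : v ∘ Fin.succAbove a = v ∘ Fin.succAbove b := by
      funext j
      simp only [Function.comp_apply]
      have h1 := val_succAbove' a j
      have h2 := val_succAbove' b j
      by_cases hj : (j : ℕ) = (a : ℕ)
      · have e1 : Fin.succAbove a j = b := Fin.ext (by rw [h1]; split_ifs <;> omega)
        have e2 : Fin.succAbove b j = a := Fin.ext (by rw [h2]; split_ifs <;> omega)
        rw [e1, e2, hv]
      · have e : Fin.succAbove a j = Fin.succAbove b j :=
          Fin.ext (by rw [h1, h2]; split_ifs <;> omega)
        rw [e]
    have hg : (-1 : ℤ) ^ (b : ℕ) • g = -((-1 : ℤ) ^ (a : ℕ) • g) := by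
      rw [hb, pow_succ, mul_neg_one, neg_smul]
    rw [hfun, hg, Finsupp.single_neg, add_neg_cancel]
    exact (vrel X G n).zero_mem
  | succ d ih =>
    intro v g a b hab hd hv
    have ha1 : (a : ℕ) + 1 < n + 2 := by omega
    set a' : Fin (n + 2) := ⟨(a : ℕ) + 1, ha1⟩ with ha'def
    have hbval : (a : ℕ) + 1 < (b : ℕ) := by omega
    set v' : Fin (n + 2) → X := v ∘ (Equiv.swap a a') with hv'def
    have hba : b ≠ a := fun h => by rw [h] at hab; omega
    have hba' : b ≠ a' := fun h => by
      have := congrArg Fin.val h; simp [ha'def] at this; omega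
    have hv' : v' a' = v' b := by
      simp only [hv'def, Function.comp_apply, Equiv.swap_apply_right,
        Equiv.swap_apply_of_ne_of_ne hba hba']
      exact hv
    have key1 : v' ∘ Fin.succAbove a' = v ∘ Fin.succAbove a := by
      funext j
      simp only [hv'def, Function.comp_apply]
      have h1 := val_succAbove' a j
      have h2 := val_succAbove' a' j
      rcases lt_trichotomy (j : ℕ) (a : ℕ) with h | h | h
      · have e1 : Fin.succAbove a' j = Fin.succAbove a j :=
          Fin.ext (by rw [h1, h2]; simp only [ha'def]; split_ifs <;> omega)
        have hne1 : Fin.succAbove a j ≠ a := by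
          intro hcon; have := congrArg Fin.val hcon; rw [h1] at this
          split_ifs at this <;> omega
        have hne2 : Fin.succAbove a j ≠ a' := by
          intro hcon; have := congrArg Fin.val hcon; rw [h1] at this
          simp only [ha'def] at this; split_ifs at this <;> omega
        rw [e1, Equiv.swap_apply_of_ne_of_ne hne1 hne2]
      · have e2 : Fin.succAbove a' j = a := Fin.ext (by
          rw [h2]; have hv2 : ((a' : Fin (n + 2)) : ℕ) = (a : ℕ) + 1 := rfl
          split_ifs <;> omega)
        have e1 : Fin.succAbove a j = a' := Fin.ext (by
          rw [h1]; have hv2 : ((a' : Fin (n + 2)) : ℕ) = (a : ℕ) + 1 := rfl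
          split_ifs <;> omega)
        rw [e2, Equiv.swap_apply_left, e1]
      · have e1 : Fin.succAbove a' j = Fin.succAbove a j :=
          Fin.ext (by rw [h1, h2]; simp only [ha'def]; split_ifs <;> omega)
        have hne1 : Fin.succAbove a j ≠ a := by
          intro hcon; have := congrArg Fin.val hcon; rw [h1] at this
          split_ifs at this <;> omega
        have hne2 : Fin.succAbove a j ≠ a' := by
          intro hcon; have := congrArg Fin.val hcon; rw [h1] at this
          simp only [ha'def] at this; split_ifs at this <;> omega
        rw [e1, Equiv.swap_apply_of_ne_of_ne hne1 hne2]
    have hlt1 : (a : ℕ) < n + 1 := by omega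
    have hlt2 : (a : ℕ) + 1 < n + 1 := by omega
    set p : Fin (n + 1) := ⟨(a : ℕ), hlt1⟩ with hpdef
    set q : Fin (n + 1) := ⟨(a : ℕ) + 1, hlt2⟩ with hqdef
    have hpq : p ≠ q := by
      intro h; have := congrArg Fin.val h; simp [hpdef, hqdef] at this
    have key2 : v' ∘ Fin.succAbove b = (v ∘ Fin.succAbove b) ∘ (Equiv.swap p q) := by
      funext j
      simp only [hv'def, Function.comp_apply]
      have h1 := val_succAbove' b j
      rcases eq_or_ne j p with hj | hjp
      · have e1 : Fin.succAbove b j = a := Fin.ext (by rw [h1, hj]; simp [hpdef]; omega)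
        have e2 : Fin.succAbove b (Equiv.swap p q j) = a' := by
          rw [hj, Equiv.swap_apply_left]
          exact Fin.ext (by rw [val_succAbove']; simp [hqdef, ha'def]; omega)
        rw [e1, Equiv.swap_apply_left, e2]
      · rcases eq_or_ne j q with hj | hjq
        · have e1 : Fin.succAbove b j = a' := by
            rw [hj]; exact Fin.ext (by rw [val_succAbove']; simp [hqdef, ha'def]; omega)
          have e2 : Fin.succAbove b (Equiv.swap p q j) = a := by
            rw [hj, Equiv.swap_apply_right]
            exact Fin.ext (by rw [val_succAbove']; simp [hpdef]; omega)
          rw [e1, Equiv.swap_apply_right, e2]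
        · have hne1 : Fin.succAbove b j ≠ a := by
            intro hcon; have := congrArg Fin.val hcon; rw [h1] at this
            have hjp' : (j : ℕ) ≠ (a : ℕ) := fun h => hjp (Fin.ext (by simp [hpdef, h]))
            split_ifs at this <;> omega
          have hne2 : Fin.succAbove b j ≠ a' := by
            intro hcon; have := congrArg Fin.val hcon; rw [h1] at this
            simp only [ha'def] at this
            have hjq' : (j : ℕ) ≠ (a : ℕ) + 1 := fun h => hjq (Fin.ext (by simp [hqdef, h]))
            split_ifs at this <;> omega
          rw [Equiv.swap_apply_of_ne_of_ne hne1 hne2,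
            Equiv.swap_apply_of_ne_of_ne hjp hjq]
    have hval : ((a' : Fin (n + 2)) : ℕ) = (a : ℕ) + 1 := rfl
    have H1 := ih v' g a' b (by omega) (by omega) hv'
    rw [key1, key2] at H1
    have H2 := vrel_swap (v ∘ Fin.succAbove b) ((-1 : ℤ) ^ (b : ℕ) • g) hpq
    have H3 := (vrel X G n).sub_mem H2 H1
    have hpow : (-1 : ℤ) ^ ((a' : Fin (n + 2)) : ℕ) • g = -((-1 : ℤ) ^ (a : ℕ) • g) := by
      simp only [ha'def]
      rw [pow_succ, mul_neg_one, neg_smul]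
    rw [hpow, Finsupp.single_neg] at H3
    convert H3 using 1
    abel

lemma vbdry_single {n : ℕ} (v : Fin (n + 2) → X) (g : G) :
    vbdry (Finsupp.single v g) =
      ∑ i : Fin (n + 2), Finsupp.single (v ∘ Fin.succAbove i) ((-1 : ℤ) ^ (i : ℕ) • g) := by
  unfold vbdry
  exact Finsupp.sum_single_index (by simp)

lemma vbdry_add {n : ℕ} (c c' : VChain X G (n + 1)) :
    vbdry (c + c') = vbdry c + vbdry c' := by
  unfold vbdry
  exact Finsupp.sum_add_index' (by simp) (by intro σ g g'; simp [smul_add, Finsupp.single_add,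
    Finset.sum_add_distrib])

open Classical in
lemma muChain_single [TopologicalSpace X] {n : ℕ} (σ : SingSimplex X n) (g : G) :
    muChain (Finsupp.single σ g) =
      if Function.Injective (vertexImage σ) then Finsupp.single (vertexImage σ) g else 0 := by
  unfold muChain
  exact Finsupp.sum_single_index (by split_ifs <;> simp)

lemma muChain_add [TopologicalSpace X] {n : ℕ} (c c' : SingChain X G n) :
    muChain (c + c') = muChain c + muChain c' := by
  classical
  unfold muChain
  exact Finsupp.sum_add_index' (by intro σ; split_ifs <;> simp)
    (by intro σ g g'; split_ifs <;> simp [Finsupp.single_add])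

lemma sbdry_single [TopologicalSpace X] {n : ℕ} (σ : SingSimplex X (n + 1)) (g : G) :
    sbdry (Finsupp.single σ g) =
      ∑ i : Fin (n + 2), Finsupp.single (σ.comp (faceMap i)) ((-1 : ℤ) ^ (i : ℕ) • g) := by
  unfold sbdry
  exact Finsupp.sum_single_index (by simp)

lemma sbdry_add [TopologicalSpace X] {n : ℕ} (c c' : SingChain X G (n + 1)) :
    sbdry (c + c') = sbdry c + sbdry c' := by
  unfold sbdry
  exact Finsupp.sum_add_index' (by simp) (by intro σ g g'; simp [smul_add, Finsupp.single_add,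
    Finset.sum_add_distrib])

lemma faceMap_vertex {n : ℕ} (i : Fin (n + 2)) (k : Fin (n + 1)) :
    faceMap i (vertex k) = vertex (Fin.succAbove i k) := by
  apply Subtype.ext
  funext j
  show (∑ k' : Fin (n + 1), if j = Fin.succAbove i k'
      then ((vertex k : TopSimplex n) : Fin (n + 1) → ℝ) k' else 0) = _
  have hv : ∀ k' : Fin (n + 1),
      ((vertex k : TopSimplex n) : Fin (n + 1) → ℝ) k' = if k = k' then 1 else 0 := fun _ => rfl
  rw [Finset.sum_eq_single k]
  · rw [hv]
    simp [vertex, eq_comm]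
  · intro k' _ hk'
    rw [hv, if_neg (Ne.symm hk')]
    simp
  · simp

lemma vertexImage_comp [TopologicalSpace X] {n : ℕ} (σ : SingSimplex X (n + 1)) (i : Fin (n + 2)) :
    vertexImage (σ.comp (faceMap i)) = vertexImage σ ∘ Fin.succAbove i := by
  funext k
  simp [vertexImage, faceMap_vertex]

lemma vrel_vbdry_single {n : ℕ} (v : Fin (n + 2) → X) (g : G)
    (hv : ¬ Function.Injective v) :
    (∑ i : Fin (n + 2), Finsupp.single (v ∘ Fin.succAbove i) ((-1 : ℤ) ^ (i : ℕ) • g))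
      ∈ vrel X G n := by
  obtain ⟨a, b, hvab, hab⟩ : ∃ a b : Fin (n + 2), v a = v b ∧ (a : ℕ) < (b : ℕ) := by
    simp only [Function.Injective, not_forall] at hv
    obtain ⟨a, b, hvab, hne⟩ := hv
    rcases lt_or_gt_of_ne (fun h : (a : ℕ) = (b : ℕ) => hne (Fin.ext h)) with h | h
    · exact ⟨a, b, hvab, h⟩
    · exact ⟨b, a, hvab.symm, h⟩
  have habne : a ≠ b := fun h => by rw [h] at hab; omega
  set f : Fin (n + 2) → VChain X G n :=
    fun i => Finsupp.single (v ∘ Fin.succAbove i) ((-1 : ℤ) ^ (i : ℕ) • g) with hf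
  have hbmem : b ∈ Finset.univ.erase a := Finset.mem_erase.mpr ⟨Ne.symm habne, Finset.mem_univ b⟩
  have hsum : ∑ i : Fin (n + 2), f i
      = f a + (f b + ∑ i ∈ (Finset.univ.erase a).erase b, f i) := by
    rw [Finset.add_sum_erase _ f hbmem, Finset.add_sum_erase _ f (Finset.mem_univ a)]
  rw [hsum, ← add_assoc]
  refine AddSubgroup.add_mem _ ?_ ?_
  · exact vrel_pair ((b : ℕ) - (a : ℕ) - 1) v g a b hab (by omega) hvab
  · refine AddSubgroup.sum_mem _ fun i hi => ?_
    rw [Finset.mem_erase, Finset.mem_erase] at hi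
    obtain ⟨hib, hia, -⟩ := hi
    obtain ⟨a', ha'⟩ := Fin.exists_succAbove_eq (Ne.symm hia)
    obtain ⟨b', hb'⟩ := Fin.exists_succAbove_eq (Ne.symm hib)
    refine vrel_single_of_not_injective (fun hinj => ?_) _
    have heq : (v ∘ Fin.succAbove i) a' = (v ∘ Fin.succAbove i) b' := by
      simp only [Function.comp_apply, ha', hb', hvab]
    have := hinj heq
    rw [this, hb'] at ha'
    exact habne ha'.symm

lemma muChain_sum [TopologicalSpace X] {n : ℕ} {ι : Type*} (s : Finset ι)
    (f : ι → SingChain X G n) :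
    muChain (∑ i ∈ s, f i) = ∑ i ∈ s, muChain (f i) := by
  classical
  induction s using Finset.induction with
  | empty =>
      simp only [Finset.sum_empty]
      exact Finsupp.sum_zero_index
  | @insert _ _ h ih => rw [Finset.sum_insert h, Finset.sum_insert h, muChain_add, ih]

open Classical in
lemma mu_single_key [TopologicalSpace X] {n : ℕ} (σ : SingSimplex X (n + 1)) (g : G) :
    muChain (sbdry (Finsupp.single σ g)) - vbdry (muChain (Finsupp.single σ g))
      ∈ vrel X G n := by
  have hmu : muChain (sbdry (Finsupp.single σ g)) =
      ∑ i : Fin (n + 2), if Function.Injective (vertexImage σ ∘ Fin.succAbove i)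
        then Finsupp.single (vertexImage σ ∘ Fin.succAbove i) ((-1 : ℤ) ^ (i : ℕ) • g)
        else 0 := by
    rw [sbdry_single, muChain_sum]
    refine Finset.sum_congr rfl fun i _ => ?_
    rw [muChain_single, vertexImage_comp]
  rw [hmu, muChain_single]
  by_cases hinj : Function.Injective (vertexImage σ)
  · rw [if_pos hinj, vbdry_single]
    have : (∑ i : Fin (n + 2), if Function.Injective (vertexImage σ ∘ Fin.succAbove i)
        then Finsupp.single (vertexImage σ ∘ Fin.succAbove i) ((-1 : ℤ) ^ (i : ℕ) • g)
        else 0)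
        = ∑ i : Fin (n + 2),
            Finsupp.single (vertexImage σ ∘ Fin.succAbove i) ((-1 : ℤ) ^ (i : ℕ) • g) :=
      Finset.sum_congr rfl fun i _ =>
        if_pos (hinj.comp (Fin.succAbove_right_injective))
    rw [this, sub_self]
    exact (vrel X G n).zero_mem
  · rw [if_neg hinj]
    have hz : vbdry (0 : VChain X G (n + 1)) = 0 := Finsupp.sum_zero_index
    rw [hz, sub_zero]
    have hsplit : (∑ i : Fin (n + 2), if Function.Injective (vertexImage σ ∘ Fin.succAbove i)
        then Finsupp.single (vertexImage σ ∘ Fin.succAbove i) ((-1 : ℤ) ^ (i : ℕ) • g)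
        else 0)
        = (∑ i : Fin (n + 2),
            Finsupp.single (vertexImage σ ∘ Fin.succAbove i) ((-1 : ℤ) ^ (i : ℕ) • g))
          + ∑ i : Fin (n + 2), (if Function.Injective (vertexImage σ ∘ Fin.succAbove i)
              then 0
              else -Finsupp.single (vertexImage σ ∘ Fin.succAbove i) ((-1 : ℤ) ^ (i : ℕ) • g)) := by
      rw [← Finset.sum_add_distrib]
      refine Finset.sum_congr rfl fun i _ => ?_
      split_ifs <;> simp
    rw [hsplit]
    refine AddSubgroup.add_mem _ (vrel_vbdry_single _ _ hinj)
      (AddSubgroup.sum_mem _ fun i _ => ?_)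
    split_ifs with h
    · exact (vrel X G n).zero_mem
    · exact (vrel X G n).neg_mem (vrel_single_of_not_injective h _)

end AuxMu

/-- The map `μ : S_*(α) → V_*(α)`, sending a singular simplex to the
oriented Vietoris simplex of its vertex images (or to `0` if they are not pairwise
distinct), is a chain map: `μ ∘ ∂ = ∂ ∘ μ` (as maps into oriented Vietoris chains,
i.e. up to the relations `vrel`). -/
theorem mu_chain_map [TopologicalSpace X] (α : Set (Set X)) (hα : ∀ U ∈ α, IsOpen U)
    (n : ℕ) (c : SingChain X G (n + 1)) (hc : InSComplex α c) :
    muChain (sbdry c) - vbdry (muChain c) ∈ vrel X G n := by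
  clear hc hα
  induction c using Finsupp.induction with
  | zero =>
      have h1 : sbdry (0 : SingChain X G (n + 1)) = 0 := Finsupp.sum_zero_index
      have h2 : muChain (0 : SingChain X G n) = 0 := Finsupp.sum_zero_index
      have h3 : muChain (0 : SingChain X G (n + 1)) = 0 := Finsupp.sum_zero_index
      have h4 : vbdry (0 : VChain X G (n + 1)) = 0 := Finsupp.sum_zero_index
      rw [h1, h3, h2, h4, sub_zero]
      exact (vrel X G n).zero_mem
  | @single_add σ g f _ _ ih =>
      rw [sbdry_add, muChain_add, muChain_add, vbdry_add]
      have : muChain (sbdry (Finsupp.single σ g)) + muChain (sbdry f)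
          - (vbdry (muChain (Finsupp.single σ g)) + vbdry (muChain f))
          = (muChain (sbdry (Finsupp.single σ g)) - vbdry (muChain (Finsupp.single σ g)))
            + (muChain (sbdry f) - vbdry (muChain f)) := by abel
      rw [this]
      exact AddSubgroup.add_mem _ (mu_single_key σ g) ih
end
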